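/- For all β > 0, integers n ≥ 2, and d > 0, the identity D(d) = J_n(βd) · ((n−1)/β²) · F_n(βd) holds, where D(d) = L1(n,d)·L3(n,d) − L2(n,d)², J_n(x) = (2−n+n·e^{x})/(e^{x}+1), and F_n(x) = (x²/(e^{2x}−1)) · ( n(n+1)(e^{x}−1)²/12 + (n+1)(e^{x}−1)/2 + 1 ). Moreover J_n(x) ≥ 1 and F_n(x) ≥ 0 for all x > 0. -/
import Mathlib

open Real Filter

/-- Entry `L1` of the Fisher information matrix for an equidistant design with
`n` points and step size `d`, covariance parameter `β`. -/
noncomputable def L1 (β : ℝ) (n : ℕ) (d : ℝ) : ℝ :=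
  (2 - (n : ℝ) + n * exp (β * d)) / (exp (β * d) + 1)

/-- Entry `L2` of the Fisher information matrix. -/
noncomputable def L2 (β : ℝ) (n : ℕ) (d : ℝ) : ℝ :=
  d * ((n : ℝ) - 1) / 2 * L1 β n d

/-- Entry `L3` of the Fisher information matrix. -/
noncomputable def L3 (β : ℝ) (n : ℕ) (d : ℝ) : ℝ :=
  d ^ 2 * ((n : ℝ) - 1) / (exp (2 * β * d) - 1) *
    ((n : ℝ) * (2 * n - 1) * (exp (β * d) - 1) ^ 2 / 6 + n * (exp (β * d) - 1) + 1)
/-- `J_n(x) = (2−n+n e^x)/(e^x+1)`. -/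
noncomputable def Jfun (n : ℕ) (x : ℝ) : ℝ := (2 - (n : ℝ) + n * exp x) / (exp x + 1)

/-- `F_n(x) = (x²/(e^{2x}−1))·(n(n+1)(e^x−1)²/12 + (n+1)(e^x−1)/2 + 1)`. -/
noncomputable def Ffun (n : ℕ) (x : ℝ) : ℝ :=
  x ^ 2 / (exp (2 * x) - 1) *
    ((n : ℝ) * (n + 1) * (exp x - 1) ^ 2 / 12 + (n + 1) * (exp x - 1) / 2 + 1)

/-- Factorization of the determinant of the Fisher information matrix:
`D(d) = J_n(βd)·((n−1)/β²)·F_n(βd)`, together with `J_n ≥ 1` and `F_n ≥ 0` on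
`(0,∞)`. -/
theorem D_factorization (β : ℝ) (hβ : 0 < β) (n : ℕ) (hn : 2 ≤ n) :
    (∀ d > (0 : ℝ),
      L1 β n d * L3 β n d - L2 β n d ^ 2 =
        Jfun n (β * d) * (((n : ℝ) - 1) / β ^ 2) * Ffun n (β * d)) ∧
    (∀ x > (0 : ℝ), 1 ≤ Jfun n x) ∧
    (∀ x > (0 : ℝ), 0 ≤ Ffun n x) := by
  have hn2 : (2 : ℝ) ≤ (n : ℝ) := by exact_mod_cast hn
  refine ⟨?_, ?_, ?_⟩
  · intro d hd
    have hx : 0 < β * d := mul_pos hβ hd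
    have hE : 1 < exp (β * d) := by
      have := exp_lt_exp.mpr hx; simpa using this
    have hE0 : exp (β * d) + 1 ≠ 0 := by positivity
    have hE1 : exp (β * d) - 1 ≠ 0 := sub_ne_zero.mpr (ne_of_gt hE)
    have h2 : exp (2 * β * d) = exp (β * d) ^ 2 := by
      rw [show 2 * β * d = β * d + β * d by ring, exp_add, sq]
    have h2' : exp (2 * (β * d)) = exp (β * d) ^ 2 := by
      rw [show 2 * (β * d) = β * d + β * d by ring, exp_add, sq]
    have hE2 : exp (β * d) ^ 2 - 1 ≠ 0 := by
      have : exp (β * d) ^ 2 - 1 = (exp (β * d) - 1) * (exp (β * d) + 1) := by ring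
      rw [this]; exact mul_ne_zero hE1 hE0
    simp only [L1, L2, L3, Jfun, Ffun, h2, h2']
    field_simp
    ring
  · intro x hx
    have hE : 1 < exp x := by simpa using exp_lt_exp.mpr hx
    have hE0 : (0 : ℝ) < exp x + 1 := by positivity
    rw [Jfun, le_div_iff₀ hE0]
    nlinarith [hE, hn2]
  · intro x hx
    have hE : 1 < exp x := by simpa using exp_lt_exp.mpr hx
    have h2' : exp (2 * x) = exp x ^ 2 := by
      rw [two_mul, exp_add, sq]
    have hE2 : 0 < exp (2 * x) - 1 := by
      rw [h2']; nlinarith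
    have hb : (0 : ℝ) ≤ (n : ℝ) * (n + 1) * (exp x - 1) ^ 2 / 12 + (n + 1) * (exp x - 1) / 2 + 1 := by
      have hn0 : (0 : ℝ) ≤ (n : ℝ) := n.cast_nonneg
      have he : (0 : ℝ) ≤ exp x - 1 := by linarith
      have t1 : (0 : ℝ) ≤ (n : ℝ) * (n + 1) * (exp x - 1) ^ 2 / 12 := by positivity
      have t2 : (0 : ℝ) ≤ ((n : ℝ) + 1) * (exp x - 1) / 2 := by positivity
      linarith
    exact mul_nonneg (div_nonneg (sq_nonneg x) hE2.le) hb
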